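/- Let X_F be a flag complex of dimension N ≥ 1 over F_q. If a Δ-eigenfunction f ∈ C^0(X_F) is type-constant (constant on vertices of each type) and the sum of its type values is zero, then Δf = (N+1)f. Conversely, every Δ-eigenfunction with eigenvalue 0 is constant and every Δ-eigenfunction with eigenvalue N+1 is type-constant with type values summing to zero; hence the maximal eigenvalue N+1 of Δ on C^0(X_F) has multiplicity exactly N. -/

import Mathlib

open scoped Classical

noncomputable section

variable {F : Type*} [Field F] [Fintype F] {V : Type*} [AddCommGroup V] [Module F V]

/-- A flag in `V`: a chain of nonzero proper subspaces. -/
def IsFlag (C : Finset (Submodule F V)) : Prop :=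
  IsChain (· ≤ ·) (C : Set (Submodule F V)) ∧ ∀ W ∈ C, W ≠ ⊥ ∧ W ≠ ⊤

/-- The number of complete flags (chains of `n+1` nonzero proper subspaces of the
`(n+2)`-dimensional space `V`, i.e. top-dimensional simplices of a flag complex)
containing a given flag `s`. -/
def flagCount (F : Type*) [Field F] {V : Type*} [AddCommGroup V] [Module F V]
    (n : ℕ) (s : Finset (Submodule F V)) : ℕ :=
  Nat.card {C : Finset (Submodule F V) // IsFlag C ∧ C.card = n + 1 ∧ s ⊆ C}


/-- `W` is a vertex of the flag complex `X_F`, i.e. `F ∪ {W}` is a flag properly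
refining `F`. -/
def VertF (Fl : Finset (Submodule F V)) (W : Submodule F V) : Prop :=
  W ∉ Fl ∧ IsFlag (insert W Fl)

/-- The laplacian `Δ = δd` on `C^0(X_F)`:
`Δf(v) = ∑_{x ∼ v} (w([v,x])/w(v)) (f(v) − f(x))`. -/
def lapF (F : Type*) [Field F] {V : Type*} [AddCommGroup V] [Module F V]
    [Fintype (Submodule F V)] (n : ℕ) (Fl : Finset (Submodule F V))
    (f : Submodule F V → ℝ) (W : Submodule F V) : ℝ :=
  (∑ U : Submodule F V,
      if U ≠ W ∧ VertF Fl U ∧ IsFlag (insert U (insert W Fl)) then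
        (flagCount F n (insert U (insert W Fl)) : ℝ) * (f W - f U)
      else 0) / (flagCount F n (insert W Fl) : ℝ)

/-!
For a chamber `C` of the link of `Fl` (a complete flag containing `Fl`) let
`Φ C = ∑_{Y ∈ C \ Fl} f Y`. Counting pairs (chamber, vertex) twice gives, for every vertex `W`,
`∑_{C ∋ W} Φ C = w(W) ((N + 1) f W - Δf W)`, so that for an eigenfunction with eigenvalue `μ`
`∑_C (Φ C)² = (N + 1 - μ) ∑_C ∑_{Y ∈ C \ Fl} (f Y)²`.
For `μ = N + 1` this forces `Φ = 0`; for `μ = 0` it is the equality case of Cauchy–Schwarz, so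
`f` is constant on every chamber. Chambers are connected by galleries, in which consecutive
chambers differ by one vertex of a fixed type, and `Φ = 0` (resp. constancy on chambers) is
transported along them: `f` is type-constant (resp. constant). Conversely a type-constant `f`
has `Φ C = ∑_α cf α` for every chamber, and the type-constant functions with zero type sum form
a space of dimension `N`.
-/

open Module Finset

lemma exists_eq_comp_of_eq {α β γ : Type*} [Nonempty γ] {p : α → Prop} {r : α → β}
    {f : α → γ} (h : ∀ a b, p a → p b → r a = r b → f a = f b) :
    ∃ g : β → γ, ∀ a, p a → f a = g (r a) := by
  have hfac : Function.FactorsThrough (fun a : Subtype p => f a) (fun a => r a) :=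
    fun a b hab => h a b a.2 b.2 hab
  exact ⟨Function.extend (fun a : Subtype p => r a) (fun a => f a)
    fun _ => Classical.arbitrary γ, fun a ha => (hfac.extend_apply _ ⟨a, ha⟩).symm⟩

lemma Finset.eq_of_sq_sum_eq_card_mul_sum_sq {ι : Type*} {s : Finset ι} {x : ι → ℝ}
    (h : (∑ i ∈ s, x i) ^ 2 = #s * ∑ i ∈ s, x i ^ 2) :
    ∀ i ∈ s, ∀ j ∈ s, x i = x j := by
  have hlagrange : ∑ i ∈ s, ∑ j ∈ s, (x i - x j) ^ 2 =
      2 * (#s * ∑ i ∈ s, x i ^ 2 - (∑ i ∈ s, x i) ^ 2) := by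
    simp only [sub_sq, sum_add_distrib, sum_sub_distrib, sum_const, ← mul_sum, ← sum_mul,
      nsmul_eq_mul]
    ring
  rw [h, sub_self, mul_zero,
    sum_eq_zero_iff_of_nonneg fun i _ => sum_nonneg fun j _ => sq_nonneg _] at hlagrange
  intro i hi j hj
  have := (sum_eq_zero_iff_of_nonneg fun j _ => sq_nonneg _).mp (hlagrange i hi) j hj
  rwa [sq_eq_zero_iff, sub_eq_zero] at this

section Flags

variable {K : Type*} [Field K] {E : Type*} [AddCommGroup E] [Module K E]

lemma IsFlag.subset {C s : Finset (Submodule K E)} (hC : IsFlag C) (hs : s ⊆ C) : IsFlag s :=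
  ⟨hC.1.mono (by exact_mod_cast hs), fun W hW => hC.2 W (hs hW)⟩

lemma IsFlag.insert_of_comparable {s : Finset (Submodule K E)} (hs : IsFlag s)
    {X : Submodule K E} (hX : X ≠ ⊥ ∧ X ≠ ⊤) (hcomp : ∀ Y ∈ s, X ≤ Y ∨ Y ≤ X) :
    IsFlag (insert X s) := by
  refine ⟨?_, fun W hW => ?_⟩
  · rw [coe_insert]
    exact hs.1.insert fun Y hY _ => hcomp Y hY
  · rcases mem_insert.mp hW with rfl | hW
    exacts [hX, hs.2 W hW]

variable [FiniteDimensional K E]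

lemma IsChain.le_of_finrank_le {s : Set (Submodule K E)} (hs : IsChain (· ≤ ·) s)
    {A B : Submodule K E} (hA : A ∈ s) (hB : B ∈ s) (h : finrank K A ≤ finrank K B) :
    A ≤ B := by
  rcases eq_or_ne A B with rfl | hne
  · exact le_rfl
  rcases hs hA hB hne with hAB | hBA
  · exact hAB
  · exact (Submodule.eq_of_le_of_finrank_le hBA h).ge

lemma IsFlag.le_of_finrank_le {C : Finset (Submodule K E)} (hC : IsFlag C)
    {A B : Submodule K E} (hA : A ∈ C) (hB : B ∈ C) (h : finrank K A ≤ finrank K B) :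
    A ≤ B :=
  hC.1.le_of_finrank_le (mem_coe.mpr hA) (mem_coe.mpr hB) h

lemma IsFlag.injOn_finrank {C : Finset (Submodule K E)} (hC : IsFlag C) :
    Set.InjOn (fun Y : Submodule K E => finrank K Y) C := fun _ hA _ hB h =>
  le_antisymm (hC.le_of_finrank_le hA hB h.le) (hC.le_of_finrank_le hB hA h.ge)

lemma Submodule.exists_finrank_eq_of_le {A B : Submodule K E} (hAB : A ≤ B) {j : ℕ}
    (hAj : finrank K A ≤ j) (hjB : j ≤ finrank K B) :
    ∃ X, A ≤ X ∧ X ≤ B ∧ finrank K X = j := by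
  induction j, hAj using Nat.le_induction with
  | base => exact ⟨A, le_rfl, hAB, rfl⟩
  | succ j _ ih =>
    obtain ⟨X, hAX, hXB, rfl⟩ := ih (by omega)
    obtain ⟨x, hxB, hxX⟩ := SetLike.exists_of_lt (lt_of_le_of_ne hXB (by rintro rfl; omega))
    exact ⟨X ⊔ span K {x}, le_sup_of_le_left hAX,
      sup_le hXB ((span_singleton_le_iff_mem _ _).mpr hxB), finrank_sup_span_singleton hxX⟩

variable {n : ℕ}

lemma IsFlag.finrank_mem_Icc (hV : finrank K E = n + 2) {C : Finset (Submodule K E)}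
    (hC : IsFlag C) {Y : Submodule K E} (hY : Y ∈ C) : finrank K Y ∈ Icc 1 (n + 1) := by
  have h1 : finrank K Y ≠ 0 := fun h => (hC.2 Y hY).1 (Submodule.finrank_eq_zero.mp h)
  have h2 := Submodule.finrank_lt (hC.2 Y hY).2
  rw [mem_Icc]
  omega

lemma IsFlag.image_finrank_subset (hV : finrank K E = n + 2) {C : Finset (Submodule K E)}
    (hC : IsFlag C) : C.image (fun Y : Submodule K E => finrank K Y) ⊆ Icc 1 (n + 1) := by
  intro α hα
  obtain ⟨Y, hY, rfl⟩ := mem_image.mp hα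
  exact hC.finrank_mem_Icc hV hY

lemma IsFlag.card_le (hV : finrank K E = n + 2) {C : Finset (Submodule K E)} (hC : IsFlag C) :
    C.card ≤ n + 1 := by
  simpa [card_image_of_injOn hC.injOn_finrank] using card_le_card (hC.image_finrank_subset hV)

lemma IsFlag.exists_finrank_eq (hV : finrank K E = n + 2) {C : Finset (Submodule K E)}
    (hC : IsFlag C) (hcard : C.card = n + 1) {α : ℕ} (hα : α ∈ Icc 1 (n + 1)) :
    ∃ Y ∈ C, finrank K Y = α := by
  have himage : C.image (fun Y : Submodule K E => finrank K Y) = Icc 1 (n + 1) :=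
    eq_of_subset_of_card_le (hC.image_finrank_subset hV)
      (by simp [card_image_of_injOn hC.injOn_finrank, hcard])
  rwa [← himage, mem_image] at hα

lemma IsFlag.filter_finrank_subset_comm (hV : finrank K E = n + 2)
    {C C' : Finset (Submodule K E)} (hC : IsFlag C) (hCc : C.card = n + 1) (hC' : IsFlag C')
    {k : ℕ} (h : C.filter (fun Y : Submodule K E => k < finrank K Y) ⊆ C') :
    C'.filter (fun Y : Submodule K E => k < finrank K Y) ⊆ C := by
  intro Y hY
  rw [mem_filter] at hY
  obtain ⟨Z, hZ, hZY⟩ := hC.exists_finrank_eq hV hCc (hC'.finrank_mem_Icc hV hY.1)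
  have hZC' : Z ∈ C' := h (mem_filter.mpr ⟨hZ, hZY ▸ hY.2⟩)
  rwa [← hC'.injOn_finrank hZC' hY.1 hZY]

/-- A missing rank is filled between the largest member below it and the smallest above it;
adjoining `⊥` and `⊤` makes both exist. -/
lemma IsFlag.exists_insert (hV : finrank K E = n + 2) {s : Finset (Submodule K E)}
    (hs : IsFlag s) (hcard : s.card < n + 1) : ∃ X ∉ s, IsFlag (insert X s) := by
  obtain ⟨α, hα, hαs⟩ := exists_mem_notMem_of_card_lt_card
    (s := s.image fun Y : Submodule K E => finrank K Y) (t := Icc 1 (n + 1))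
    (by simpa [card_image_of_injOn hs.injOn_finrank] using hcard)
  rw [mem_Icc] at hα
  have hαs' : ∀ Y ∈ s, finrank K Y ≠ α := fun Y hY h => hαs (mem_image.mpr ⟨Y, hY, h⟩)
  set t := insert ⊥ (insert ⊤ s)
  have ht : IsChain (· ≤ ·) (t : Set (Submodule K E)) := by
    simp only [t, coe_insert]
    exact (hs.1.insert fun _ _ _ => Or.inr le_top).insert fun _ _ _ => Or.inl bot_le
  obtain ⟨A, hA, hAmax⟩ := exists_max_image (t.filter fun Y : Submodule K E => finrank K Y < α)
    (fun Y : Submodule K E => finrank K Y) ⟨⊥, by simp [t]; omega⟩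
  obtain ⟨B, hB, hBmin⟩ := exists_min_image (t.filter fun Y : Submodule K E => α < finrank K Y)
    (fun Y : Submodule K E => finrank K Y) ⟨⊤, by simp [t, hV]; omega⟩
  rw [mem_filter] at hA hB
  obtain ⟨X, hAX, hXB, hX⟩ := Submodule.exists_finrank_eq_of_le
    (ht.le_of_finrank_le hA.1 hB.1 (by omega)) hA.2.le hB.2.le
  refine ⟨X, fun hX' => hαs' X hX' hX, hs.insert_of_comparable ⟨?_, ?_⟩ fun Y hY => ?_⟩
  · rintro rfl
    simp at hX
    omega
  · rintro rfl
    rw [finrank_top] at hX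
    omega
  have hYt : Y ∈ t := mem_insert_of_mem (mem_insert_of_mem hY)
  rcases lt_or_gt_of_ne (hαs' Y hY) with h | h
  · exact Or.inr ((ht.le_of_finrank_le hYt hA.1 (hAmax Y (mem_filter.mpr ⟨hYt, h⟩))).trans hAX)
  · exact Or.inl (hXB.trans (ht.le_of_finrank_le hB.1 hYt (hBmin Y (mem_filter.mpr ⟨hYt, h⟩))))

lemma IsFlag.exists_complete (hV : finrank K E = n + 2) {s : Finset (Submodule K E)}
    (hs : IsFlag s) : ∃ C, IsFlag C ∧ C.card = n + 1 ∧ s ⊆ C := by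
  induction h : n + 1 - s.card generalizing s with
  | zero => exact ⟨s, hs, le_antisymm (hs.card_le hV) (by omega), subset_rfl⟩
  | succ k ih =>
    obtain ⟨X, hXs, hX⟩ := hs.exists_insert hV (by omega)
    obtain ⟨C, hC, hcard, hsub⟩ := ih hX (by rw [card_insert_of_notMem hXs]; omega)
    exact ⟨C, hC, hcard, (subset_insert _ _).trans hsub⟩

end Flags

section Chambers

variable {K : Type*} [Field K] {E : Type*} [AddCommGroup E] [Module K E]
  [Fintype (Submodule K E)] {n N : ℕ} {Fl : Finset (Submodule K E)}

/-- The flags of `n + 1` members containing `s`; they are the complete flags containing `s`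
when `finrank K E = n + 2`. -/
def chambers (n : ℕ) (s : Finset (Submodule K E)) : Finset (Finset (Submodule K E)) :=
  univ.filter fun C => IsFlag C ∧ C.card = n + 1 ∧ s ⊆ C

lemma mem_chambers {s C : Finset (Submodule K E)} :
    C ∈ chambers n s ↔ IsFlag C ∧ C.card = n + 1 ∧ s ⊆ C := by
  simp [chambers]

lemma flagCount_eq_card_chambers (n : ℕ) (s : Finset (Submodule K E)) :
    flagCount K n s = (chambers n s).card := by
  rw [flagCount, Nat.card_eq_fintype_card, Fintype.card_subtype, chambers]

lemma chambers_eq_empty_of_not_isFlag {s : Finset (Submodule K E)} (hs : ¬ IsFlag s) :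
    chambers n s = ∅ :=
  filter_eq_empty_iff.mpr fun _ _ hC => hs (hC.1.subset hC.2.2)

lemma chambers_nonempty [FiniteDimensional K E] (hV : finrank K E = n + 2)
    {s : Finset (Submodule K E)} (hs : IsFlag s) : (chambers n s).Nonempty := by
  obtain ⟨C, hC⟩ := hs.exists_complete hV
  exact ⟨C, mem_chambers.mpr hC⟩

lemma chambers_subset_of_subset {s t : Finset (Submodule K E)} (h : s ⊆ t) :
    chambers n t ⊆ chambers n s := fun C hC => by
  obtain ⟨hCf, hCc, hsub⟩ := mem_chambers.mp hC
  exact mem_chambers.mpr ⟨hCf, hCc, h.trans hsub⟩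

lemma card_sdiff_of_mem_chambers (hcard : Fl.card + N = n) {C : Finset (Submodule K E)}
    (hC : C ∈ chambers n Fl) : (C \ Fl).card = N + 1 := by
  obtain ⟨-, hCc, hsub⟩ := mem_chambers.mp hC
  rw [card_sdiff_of_subset hsub]
  omega

lemma VertF.of_mem_sdiff {C : Finset (Submodule K E)} (hC : C ∈ chambers n Fl)
    {Y : Submodule K E} (hY : Y ∈ C \ Fl) : VertF Fl Y :=
  ⟨(mem_sdiff.mp hY).2,
    (mem_chambers.mp hC).1.subset (insert_subset (mem_sdiff.mp hY).1 (mem_chambers.mp hC).2.2)⟩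

lemma VertF.exists_mem_chambers [FiniteDimensional K E] (hV : finrank K E = n + 2)
    {W : Submodule K E} (hW : VertF Fl W) : ∃ C ∈ chambers n Fl, W ∈ C \ Fl := by
  obtain ⟨C, hC⟩ := chambers_nonempty hV hW.2
  obtain ⟨hCf, hCc, hsub⟩ := mem_chambers.mp hC
  exact ⟨C, mem_chambers.mpr ⟨hCf, hCc, (subset_insert _ _).trans hsub⟩,
    mem_sdiff.mpr ⟨hsub (mem_insert_self _ _), hW.1⟩⟩

lemma sum_chambers_sum_sdiff {M : Type*} [AddCommMonoid M] (s : Finset (Submodule K E))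
    (G : Submodule K E → Finset (Submodule K E) → M) :
    ∑ C ∈ chambers n s, ∑ Y ∈ C \ s, G Y C =
      ∑ U ∈ sᶜ, ∑ C ∈ chambers n (insert U s), G U C :=
  sum_comm' fun C U => by
    simp only [mem_chambers, mem_sdiff, mem_compl, insert_subset_iff]
    tauto

lemma sum_chambers_sum_sdiff_eq_sum_flagCount (s : Finset (Submodule K E))
    (g : Submodule K E → ℝ) :
    ∑ C ∈ chambers n s, ∑ Y ∈ C \ s, g Y =
      ∑ U ∈ sᶜ, flagCount K n (insert U s) * g U := by
  simp [sum_chambers_sum_sdiff, flagCount_eq_card_chambers]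

lemma flagCount_mul_lapF (f : Submodule K E → ℝ) (W : Submodule K E) :
    flagCount K n (insert W Fl) * lapF K n Fl f W =
      ∑ C ∈ chambers n (insert W Fl), ∑ Y ∈ C \ insert W Fl, (f W - f Y) := by
  have hterm : ∀ U, (if U ≠ W ∧ VertF Fl U ∧ IsFlag (insert U (insert W Fl)) then
        (flagCount K n (insert U (insert W Fl)) : ℝ) * (f W - f U) else 0) =
      if U ∈ (insert W Fl)ᶜ then
        (flagCount K n (insert U (insert W Fl)) : ℝ) * (f W - f U) else 0 := by
    intro U
    by_cases hflag : IsFlag (insert U (insert W Fl))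
    · have hiff : (U ≠ W ∧ VertF Fl U ∧ IsFlag (insert U (insert W Fl))) ↔
          U ∈ (insert W Fl)ᶜ := by
        simp only [mem_compl, mem_insert, not_or, VertF]
        exact ⟨fun h => ⟨h.1, h.2.1.1⟩, fun h => ⟨h.1,
          ⟨h.2, hflag.subset (insert_subset_insert _ (subset_insert _ _))⟩, hflag⟩⟩
      simp only [hiff]
    · simp [flagCount_eq_card_chambers, chambers_eq_empty_of_not_isFlag hflag]
  rcases eq_or_ne (flagCount K n (insert W Fl)) 0 with h0 | h0
  · rw [flagCount_eq_card_chambers, card_eq_zero] at h0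
    simp [flagCount_eq_card_chambers, h0]
  · rw [lapF, mul_div_cancel₀ _ (by exact_mod_cast h0), sum_congr rfl fun U _ => hterm U,
      sum_ite_mem, univ_inter, sum_chambers_sum_sdiff_eq_sum_flagCount]

lemma sum_chambers_insert_sum_sdiff (hcard : Fl.card + N = n) (f : Submodule K E → ℝ)
    {W : Submodule K E} (hW : W ∉ Fl) :
    ∑ C ∈ chambers n (insert W Fl), ∑ Y ∈ C \ Fl, f Y =
      flagCount K n (insert W Fl) * ((N + 1) * f W - lapF K n Fl f W) := by
  rw [mul_sub, flagCount_mul_lapF, flagCount_eq_card_chambers, ← nsmul_eq_mul, ← sum_const,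
    ← sum_sub_distrib]
  refine sum_congr rfl fun C hC => ?_
  obtain ⟨-, hCcard, hsub⟩ := mem_chambers.mp hC
  have hsplit : C \ Fl = insert W (C \ insert W Fl) := by
    ext Y
    by_cases hY : Y = W <;> simp [hY, hsub (mem_insert_self W Fl), hW]
  have hcard' : (C \ insert W Fl).card = N := by
    rw [card_sdiff_of_subset hsub, card_insert_of_notMem hW]
    omega
  rw [hsplit, sum_insert (by simp), sum_sub_distrib, sum_const, hcard', nsmul_eq_mul]
  ring

theorem sum_sq_sum_sdiff_of_lapF_eq (hcard : Fl.card + N = n) {f : Submodule K E → ℝ}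
    {μ : ℝ} (hf : ∀ W, VertF Fl W → lapF K n Fl f W = μ * f W) :
    ∑ C ∈ chambers n Fl, (∑ Y ∈ C \ Fl, f Y) ^ 2 =
      ((N : ℝ) + 1 - μ) * ∑ C ∈ chambers n Fl, ∑ Y ∈ C \ Fl, f Y ^ 2 := by
  have hlocal : ∀ U ∈ Flᶜ, f U * ∑ C ∈ chambers n (insert U Fl), ∑ Y ∈ C \ Fl, f Y =
      ((N : ℝ) + 1 - μ) * (flagCount K n (insert U Fl) * f U ^ 2) := by
    intro U hU
    rw [mem_compl] at hU
    rw [sum_chambers_insert_sum_sdiff hcard f hU]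
    by_cases hvert : VertF Fl U
    · rw [hf U hvert]
      ring
    · rw [flagCount_eq_card_chambers,
        chambers_eq_empty_of_not_isFlag fun h => hvert ⟨hU, h⟩]
      simp
  calc ∑ C ∈ chambers n Fl, (∑ Y ∈ C \ Fl, f Y) ^ 2
      = ∑ C ∈ chambers n Fl, ∑ Y ∈ C \ Fl, f Y * ∑ Z ∈ C \ Fl, f Z := by
        simp only [sq, sum_mul]
    _ = ∑ U ∈ Flᶜ, f U * ∑ C ∈ chambers n (insert U Fl), ∑ Y ∈ C \ Fl, f Y := by
        rw [sum_chambers_sum_sdiff]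
        exact sum_congr rfl fun U _ => (mul_sum ..).symm
    _ = _ := by rw [sum_congr rfl hlocal, ← mul_sum, sum_chambers_sum_sdiff_eq_sum_flagCount]

lemma sum_sdiff_eq_zero_of_lapF_eq (hcard : Fl.card + N = n) {f : Submodule K E → ℝ}
    (hf : ∀ W, VertF Fl W → lapF K n Fl f W = (N + 1) * f W) :
    ∀ C ∈ chambers n Fl, ∑ Y ∈ C \ Fl, f Y = 0 := by
  have h := sum_sq_sum_sdiff_of_lapF_eq hcard hf
  rw [sub_self, zero_mul, sum_eq_zero_iff_of_nonneg fun _ _ => sq_nonneg _] at h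
  exact fun C hC => pow_eq_zero_iff two_ne_zero |>.mp (h C hC)

lemma eq_of_mem_sdiff_of_lapF_eq_zero (hcard : Fl.card + N = n) {f : Submodule K E → ℝ}
    (hf : ∀ W, VertF Fl W → lapF K n Fl f W = 0) :
    ∀ C ∈ chambers n Fl, ∀ Y ∈ C \ Fl, ∀ Z ∈ C \ Fl, f Y = f Z := by
  have hcardC : ∀ C ∈ chambers n Fl, ((C \ Fl).card : ℝ) = N + 1 := fun C hC => by
    rw [card_sdiff_of_mem_chambers hcard hC]
    push_cast
    rfl
  have h := sum_sq_sum_sdiff_of_lapF_eq hcard (μ := 0) (by simpa using hf)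
  rw [sub_zero, mul_sum] at h
  have hle : ∀ C ∈ chambers n Fl, (∑ Y ∈ C \ Fl, f Y) ^ 2 ≤
      ((N : ℝ) + 1) * ∑ Y ∈ C \ Fl, f Y ^ 2 := fun C hC =>
    hcardC C hC ▸ sq_sum_le_card_mul_sum_sq
  intro C hC
  exact eq_of_sq_sum_eq_card_mul_sum_sq
    ((hcardC C hC).symm ▸ (sum_eq_sum_iff_of_le hle).mp h C hC)

end Chambers

section Galleries

variable {K : Type*} [Field K] {E : Type*} [AddCommGroup E] [Module K E]
  [Fintype (Submodule K E)] [FiniteDimensional K E] {n : ℕ} {Fl : Finset (Submodule K E)}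

lemma insert_erase_mem_chambers (hV : finrank K E = n + 2) {C : Finset (Submodule K E)}
    (hC : C ∈ chambers n Fl) {U X : Submodule K E} (hU : U ∈ C) (hUFl : U ∉ Fl)
    (hX : finrank K X = finrank K U) (hcomp : ∀ Y ∈ C, Y ≠ U → X ≤ Y ∨ Y ≤ X) :
    insert X (C.erase U) ∈ chambers n Fl := by
  obtain ⟨hCf, hCc, hsub⟩ := mem_chambers.mp hC
  have hXU : X ∉ C.erase U := fun h =>
    (mem_erase.mp h).1 (hCf.injOn_finrank (mem_erase.mp h).2 hU hX)
  have hUr := mem_Icc.mp (hCf.finrank_mem_Icc hV hU)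
  refine mem_chambers.mpr ⟨(hCf.subset (erase_subset _ _)).insert_of_comparable ⟨?_, ?_⟩
    fun Y hY => hcomp Y (mem_erase.mp hY).2 (mem_erase.mp hY).1, ?_, fun Y hY => ?_⟩
  · rintro rfl
    rw [finrank_bot] at hX
    omega
  · rintro rfl
    rw [finrank_top] at hX
    omega
  · rw [card_insert_of_notMem hXU, card_erase_of_mem hU, hCc]
    rfl
  · exact mem_insert_of_mem (mem_erase.mpr ⟨fun h => hUFl (h ▸ hY), hsub hY⟩)

lemma sum_sdiff_insert_erase {C : Finset (Submodule K E)} (hC : C ∈ chambers n Fl)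
    {U X : Submodule K E} (hU : U ∈ C \ Fl) (hX : finrank K X = finrank K U)
    (g : Submodule K E → ℝ) :
    ∑ Y ∈ insert X (C.erase U) \ Fl, g Y + g U = ∑ Y ∈ C \ Fl, g Y + g X := by
  obtain ⟨hCf, -, hsub⟩ := mem_chambers.mp hC
  have hXC : X ∈ C → X = U := fun h => hCf.injOn_finrank h (mem_sdiff.mp hU).1 hX
  have hXFl : X ∉ Fl := fun h => (mem_sdiff.mp hU).2 (hXC (hsub h) ▸ h)
  have hXU : X ∉ (C \ Fl).erase U := fun h =>
    (mem_erase.mp h).1 (hXC (mem_sdiff.mp (mem_erase.mp h).2).1)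
  rw [insert_sdiff_of_notMem _ hXFl, erase_sdiff_comm, sum_insert hXU, ← add_sum_erase _ _ hU]
  ring

lemma exists_chamber_le_of_agree (hV : finrank K E = n + 2) {C C' : Finset (Submodule K E)}
    (hC : C ∈ chambers n Fl) (hC' : C' ∈ chambers n Fl) {k : ℕ}
    (hagree : C.filter (fun Y : Submodule K E => k + 1 < finrank K Y) ⊆ C')
    {U U' : Submodule K E} (hU : U ∈ C) (hU' : U' ∈ C') (hUr : finrank K U = k + 1)
    (hU'r : finrank K U' = k + 1) :
    ∃ C₁ ∈ chambers n Fl, C.filter (fun Y : Submodule K E => k < finrank K Y) ⊆ C₁ ∧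
      ∀ Y ∈ C₁, finrank K Y ≤ k → Y ≤ U' := by
  obtain ⟨hCf, hCc, hsub⟩ := mem_chambers.mp hC
  obtain ⟨hC'f, -, hsub'⟩ := mem_chambers.mp hC'
  -- `U`, `U'` lie in the common member of rank `k + 2` (or in `E`), so `U ⊓ U'` has rank ≥ `k`
  have hsup : finrank K ↥(U ⊔ U') ≤ k + 2 := by
    by_cases hk : k + 2 ≤ n + 1
    · obtain ⟨B, hB, hBr⟩ := hCf.exists_finrank_eq hV hCc (mem_Icc.mpr ⟨by omega, hk⟩)
      have hBC' : B ∈ C' := hagree (mem_filter.mpr ⟨hB, by omega⟩)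
      rw [← hBr]
      exact Submodule.finrank_mono (sup_le (hCf.le_of_finrank_le hU hB (by omega))
        (hC'f.le_of_finrank_le hU' hBC' (by omega)))
    · have := Submodule.finrank_le (U ⊔ U')
      omega
  have hinf : k ≤ finrank K ↥(U ⊓ U') := by
    have := Submodule.finrank_sup_add_finrank_inf_eq U U'
    omega
  by_cases hD : U ⊓ U' = ⊥
  · refine ⟨C, hC, filter_subset _ _, fun Y hY hYk => ?_⟩
    rw [hD, finrank_bot] at hinf
    have := mem_Icc.mp (hCf.finrank_mem_Icc hV hY)
    omega
  have hDtop : U ⊓ U' ≠ ⊤ := fun h => by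
    have hle := Submodule.finrank_mono (inf_le_left : U ⊓ U' ≤ U)
    have := mem_Icc.mp (hCf.finrank_mem_Icc hV hU)
    rw [h, finrank_top] at hle
    omega
  have hs : IsFlag (insert (U ⊓ U')
      (C.filter fun Y : Submodule K E => k < finrank K Y ∨ Y ∈ Fl)) := by
    refine (hCf.subset (filter_subset _ _)).insert_of_comparable ⟨hD, hDtop⟩ fun Y hY => ?_
    obtain ⟨hYC, hY⟩ := mem_filter.mp hY
    by_cases hYk : k < finrank K Y
    · exact Or.inl (inf_le_left.trans (hCf.le_of_finrank_le hU hYC (by omega)))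
    · have hYFl := hY.resolve_left hYk
      exact Or.inr (le_inf (hCf.le_of_finrank_le hYC hU (by omega))
        (hC'f.le_of_finrank_le (hsub' hYFl) hU' (by omega)))
  obtain ⟨C₁, hC₁f, hC₁c, hsC₁⟩ := hs.exists_complete hV
  refine ⟨C₁, mem_chambers.mpr ⟨hC₁f, hC₁c, fun Y hY => ?_⟩, fun Y hY => ?_,
    fun Y hY hYk => ?_⟩
  · exact hsC₁ (mem_insert_of_mem (mem_filter.mpr ⟨hsub hY, Or.inr hY⟩))
  · obtain ⟨hYC, hYk⟩ := mem_filter.mp hY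
    exact hsC₁ (mem_insert_of_mem (mem_filter.mpr ⟨hYC, Or.inl hYk⟩))
  · exact (hC₁f.le_of_finrank_le hY (hsC₁ (mem_insert_self _ _)) (by omega)).trans inf_le_right

lemma chambers_induction_step (hV : finrank K E = n + 2) {P : Finset (Submodule K E) → Prop}
    (hswap : ∀ C ∈ chambers n Fl, ∀ U ∈ C \ Fl, ∀ X : Submodule K E,
      finrank K X = finrank K U → insert X (C.erase U) ∈ chambers n Fl →
        P C → P (insert X (C.erase U)))
    {k : ℕ} (hk : k + 1 ≤ n + 1)
    (ih : ∀ C ∈ chambers n Fl, ∀ C' ∈ chambers n Fl,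
      C.filter (fun Y : Submodule K E => k < finrank K Y) ⊆ C' → P C → P C')
    {C C' : Finset (Submodule K E)} (hC : C ∈ chambers n Fl) (hC' : C' ∈ chambers n Fl)
    (hagree : C.filter (fun Y : Submodule K E => k + 1 < finrank K Y) ⊆ C') (hP : P C) :
    P C' := by
  obtain ⟨hCf, hCc, -⟩ := mem_chambers.mp hC
  obtain ⟨hC'f, hC'c, hsub'⟩ := mem_chambers.mp hC'
  obtain ⟨U, hU, hUr⟩ := hCf.exists_finrank_eq hV hCc (mem_Icc.mpr ⟨by omega, hk⟩)
  obtain ⟨U', hU', hU'r⟩ := hC'f.exists_finrank_eq hV hC'c (mem_Icc.mpr ⟨by omega, hk⟩)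
  by_cases hUU' : U = U'
  · refine ih C hC C' hC' (fun Y hY => ?_) hP
    obtain ⟨hYC, hYk⟩ := mem_filter.mp hY
    rcases eq_or_lt_of_le (Nat.succ_le_of_lt hYk) with h | h
    · rwa [hCf.injOn_finrank hYC hU (h.symm.trans hUr.symm), hUU']
    · exact hagree (mem_filter.mpr ⟨hYC, h⟩)
  -- pass to a chamber `C₁` whose members below `U` lie under `U'`, then exchange `U` for `U'`
  obtain ⟨C₁, hC₁, hCC₁, hC₁le⟩ :=
    exists_chamber_le_of_agree hV hC hC' hagree hU hU' hUr hU'r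
  obtain ⟨hC₁f, -, -⟩ := mem_chambers.mp hC₁
  have hUC₁ : U ∈ C₁ := hCC₁ (mem_filter.mpr ⟨hU, by omega⟩)
  have hUFl : U ∉ Fl := fun h =>
    hUU' (hC'f.injOn_finrank (hsub' h) hU' (hUr.trans hU'r.symm))
  have hhigh : ∀ Y ∈ C₁, Y ≠ U → k < finrank K Y → Y ∈ C' := by
    intro Y hY hYU hYk
    have hYC : Y ∈ C := hCf.filter_finrank_subset_comm hV hCc hC₁f hCC₁
      (mem_filter.mpr ⟨hY, hYk⟩)
    refine hagree (mem_filter.mpr ⟨hYC, lt_of_le_of_ne hYk fun h => hYU ?_⟩)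
    exact hC₁f.injOn_finrank hY hUC₁ (h.symm.trans hUr.symm)
  have hC₂ : insert U' (C₁.erase U) ∈ chambers n Fl := by
    refine insert_erase_mem_chambers hV hC₁ hUC₁ hUFl (hU'r.trans hUr.symm) fun Y hY hYU => ?_
    rcases le_or_gt (finrank K Y) k with h | h
    · exact Or.inr (hC₁le Y hY h)
    · exact Or.inl (hC'f.le_of_finrank_le hU' (hhigh Y hY hYU h) (by omega))
  refine ih _ hC₂ C' hC' (fun Y hY => ?_) (hswap C₁ hC₁ U (mem_sdiff.mpr ⟨hUC₁, hUFl⟩)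
    U' (hU'r.trans hUr.symm) hC₂ (ih C hC C₁ hC₁ hCC₁ hP))
  obtain ⟨hY, hYk⟩ := mem_filter.mp hY
  rcases mem_insert.mp hY with rfl | hY
  · exact hU'
  · exact hhigh Y (mem_erase.mp hY).2 (mem_erase.mp hY).1 hYk

/-- Gallery connectedness of the chambers of the link of `Fl`. -/
theorem chambers_induction (hV : finrank K E = n + 2) {P : Finset (Submodule K E) → Prop}
    (hswap : ∀ C ∈ chambers n Fl, ∀ U ∈ C \ Fl, ∀ X : Submodule K E,
      finrank K X = finrank K U → insert X (C.erase U) ∈ chambers n Fl →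
        P C → P (insert X (C.erase U)))
    {C C' : Finset (Submodule K E)} (hC : C ∈ chambers n Fl) (hC' : C' ∈ chambers n Fl)
    (hP : P C) : P C' := by
  suffices H : ∀ k ≤ n + 1, ∀ C ∈ chambers n Fl, ∀ C' ∈ chambers n Fl,
      C.filter (fun Y : Submodule K E => k < finrank K Y) ⊆ C' → P C → P C' by
    refine H (n + 1) le_rfl C hC C' hC' (fun Y hY => ?_) hP
    obtain ⟨hYC, hYr⟩ := mem_filter.mp hY
    have := mem_Icc.mp ((mem_chambers.mp hC).1.finrank_mem_Icc hV hYC)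
    omega
  intro k
  induction k with
  | zero =>
    intro _ C hC C' hC' hagree hP
    obtain ⟨hCf, hCc, -⟩ := mem_chambers.mp hC
    have hCC' : C ⊆ C' := fun Y hY => hagree (mem_filter.mpr
      ⟨hY, (mem_Icc.mp (hCf.finrank_mem_Icc hV hY)).1⟩)
    rwa [← eq_of_subset_of_card_le hCC' (by rw [hCc, (mem_chambers.mp hC').2.1])]
  | succ k ih =>
    intro hk C hC C' hC' hagree hP
    exact chambers_induction_step hV hswap hk (ih (by omega)) hC hC' hagree hP

lemma eq_of_finrank_eq_of_swap (hV : finrank K E = n + 2) {f : Submodule K E → ℝ}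
    (hswap : ∀ C ∈ chambers n Fl, ∀ U ∈ C \ Fl, ∀ X : Submodule K E,
      finrank K X = finrank K U → insert X (C.erase U) ∈ chambers n Fl → f X = f U)
    {W W' : Submodule K E} (hW : VertF Fl W) (hW' : VertF Fl W')
    (h : finrank K W = finrank K W') : f W = f W' := by
  obtain ⟨C, hC, hWC⟩ := hW.exists_mem_chambers hV
  obtain ⟨C', hC', hWC'⟩ := hW'.exists_mem_chambers hV
  refine chambers_induction hV (P := fun D => ∀ Y ∈ D, ∀ Y' ∈ C',
      finrank K Y = finrank K Y' → f Y = f Y') ?_ hC' hC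
    (fun Y hY Y' hY' hYY' => by rw [(mem_chambers.mp hC').1.injOn_finrank hY hY' hYY'])
    W (mem_sdiff.mp hWC).1 W' (mem_sdiff.mp hWC').1 h
  intro D hD U hU X hX hD' hP Y hY Y' hY' hYY'
  rcases mem_insert.mp hY with rfl | hY
  · rw [hswap D hD U hU Y hX hD']
    exact hP U (mem_sdiff.mp hU).1 Y' hY' (hX ▸ hYY')
  · exact hP Y (mem_of_mem_erase hY) Y' hY' hYY'

end Galleries

section Spectrum

variable {K : Type*} [Field K] {E : Type*} [AddCommGroup E] [Module K E]
  [Fintype (Submodule K E)] [FiniteDimensional K E] {n N : ℕ} {Fl : Finset (Submodule K E)}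

def linkTypes (n : ℕ) (Fl : Finset (Submodule K E)) : Finset ℕ :=
  (Icc 1 (n + 1)).filter fun α => ∀ U ∈ Fl, finrank K U ≠ α

def typeIndicator (Fl : Finset (Submodule K E)) (α : ℕ) (W : Submodule K E) : ℝ :=
  if VertF Fl W ∧ finrank K W = α then 1 else 0

lemma image_finrank_sdiff (hV : finrank K E = n + 2) {C : Finset (Submodule K E)}
    (hC : C ∈ chambers n Fl) :
    (C \ Fl).image (fun Y : Submodule K E => finrank K Y) = linkTypes n Fl := by
  obtain ⟨hCf, hCc, hsub⟩ := mem_chambers.mp hC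
  ext α
  simp only [mem_image, mem_sdiff, linkTypes, mem_filter]
  constructor
  · rintro ⟨Y, ⟨hYC, hYFl⟩, rfl⟩
    exact ⟨hCf.finrank_mem_Icc hV hYC,
      fun U hU h => hYFl (hCf.injOn_finrank hYC (hsub hU) h.symm ▸ hU)⟩
  · rintro ⟨hα, hαFl⟩
    obtain ⟨Y, hY, rfl⟩ := hCf.exists_finrank_eq hV hCc hα
    exact ⟨Y, ⟨hY, fun h => hαFl Y h rfl⟩, rfl⟩

lemma sum_sdiff_comp_finrank (hV : finrank K E = n + 2) {C : Finset (Submodule K E)}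
    (hC : C ∈ chambers n Fl) (c : ℕ → ℝ) :
    ∑ Y ∈ C \ Fl, c (finrank K Y) = ∑ α ∈ linkTypes n Fl, c α := by
  rw [← image_finrank_sdiff hV hC,
    sum_image ((mem_chambers.mp hC).1.injOn_finrank.mono (coe_subset.mpr sdiff_subset))]

lemma VertF.finrank_mem_linkTypes (hV : finrank K E = n + 2) {W : Submodule K E}
    (hW : VertF Fl W) : finrank K W ∈ linkTypes n Fl := by
  obtain ⟨C, hC, hWC⟩ := hW.exists_mem_chambers hV
  exact image_finrank_sdiff hV hC ▸ mem_image_of_mem _ hWC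

lemma exists_vertF_finrank_eq (hV : finrank K E = n + 2) (hF : IsFlag Fl) {α : ℕ}
    (hα : α ∈ linkTypes n Fl) : ∃ W, VertF Fl W ∧ finrank K W = α := by
  obtain ⟨C, hC⟩ := chambers_nonempty hV hF
  rw [← image_finrank_sdiff hV hC, mem_image] at hα
  obtain ⟨W, hW, rfl⟩ := hα
  exact ⟨W, VertF.of_mem_sdiff hC hW, rfl⟩

lemma card_linkTypes (hV : finrank K E = n + 2) (hF : IsFlag Fl) (hcard : Fl.card + N = n) :
    (linkTypes n Fl).card = N + 1 := by
  obtain ⟨C, hC⟩ := chambers_nonempty hV hF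
  rw [← image_finrank_sdiff hV hC,
    card_image_of_injOn ((mem_chambers.mp hC).1.injOn_finrank.mono (coe_subset.mpr sdiff_subset)),
    card_sdiff_of_mem_chambers hcard hC]

theorem lapF_eq_of_typeConstant (hV : finrank K E = n + 2) (hcard : Fl.card + N = n)
    {cf : ℕ → ℝ} (hsum : ∑ α ∈ linkTypes n Fl, cf α = 0) {f : Submodule K E → ℝ}
    (hf : ∀ W, VertF Fl W → f W = cf (finrank K W)) {W : Submodule K E} (hW : VertF Fl W) :
    lapF K n Fl f W = (N + 1) * f W := by
  have hzero : ∑ C ∈ chambers n (insert W Fl), ∑ Y ∈ C \ Fl, f Y = 0 := by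
    refine sum_eq_zero fun C hC => ?_
    have hC' := chambers_subset_of_subset (subset_insert W Fl) hC
    rw [sum_congr rfl fun Y hY => hf Y (VertF.of_mem_sdiff hC' hY),
      sum_sdiff_comp_finrank hV hC', hsum]
  rw [sum_chambers_insert_sum_sdiff hcard f hW.1, mul_eq_zero, sub_eq_zero] at hzero
  have hw : (flagCount K n (insert W Fl) : ℝ) ≠ 0 := by
    rw [flagCount_eq_card_chambers, Nat.cast_ne_zero, ← pos_iff_ne_zero, card_pos]
    exact chambers_nonempty hV hW.2
  exact (hzero.resolve_left hw).symm

theorem exists_typeConstant_of_lapF_eq (hV : finrank K E = n + 2) (hF : IsFlag Fl)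
    (hcard : Fl.card + N = n) {f : Submodule K E → ℝ}
    (hf : ∀ W, VertF Fl W → lapF K n Fl f W = (N + 1) * f W) :
    ∃ cf : ℕ → ℝ, (∀ W, VertF Fl W → f W = cf (finrank K W)) ∧
      ∑ α ∈ linkTypes n Fl, cf α = 0 := by
  have hzero := sum_sdiff_eq_zero_of_lapF_eq hcard hf
  obtain ⟨cf, hcf⟩ := exists_eq_comp_of_eq fun W W' hW hW' =>
    eq_of_finrank_eq_of_swap hV (fun C hC U hU X hX hC' => by
      linarith [sum_sdiff_insert_erase hC hU hX f, hzero C hC, hzero _ hC']) hW hW'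
  obtain ⟨C₀, hC₀⟩ := chambers_nonempty hV hF
  refine ⟨cf, hcf, ?_⟩
  rw [← sum_sdiff_comp_finrank hV hC₀, ← hzero C₀ hC₀]
  exact sum_congr rfl fun Y hY => (hcf Y (VertF.of_mem_sdiff hC₀ hY)).symm

theorem exists_const_of_lapF_eq_zero (hV : finrank K E = n + 2) (hF : IsFlag Fl) (hN : 1 ≤ N)
    (hcard : Fl.card + N = n) {f : Submodule K E → ℝ}
    (hf : ∀ W, VertF Fl W → lapF K n Fl f W = 0) :
    ∃ c : ℝ, ∀ W, VertF Fl W → f W = c := by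
  have hconst := eq_of_mem_sdiff_of_lapF_eq_zero hcard hf
  obtain ⟨C₀, hC₀⟩ := chambers_nonempty hV hF
  obtain ⟨Y₀, hY₀⟩ := card_pos.mp (by rw [card_sdiff_of_mem_chambers hcard hC₀]; omega)
  refine ⟨f Y₀, fun W hW => ?_⟩
  obtain ⟨C, hC, hWC⟩ := hW.exists_mem_chambers hV
  refine chambers_induction hV (P := fun C => ∀ Y ∈ C \ Fl, f Y = f Y₀) ?_ hC₀ hC
    (fun Y hY => hconst C₀ hC₀ Y hY Y₀ hY₀) W hWC
  intro C hC U hU X hX hC' hP Y hY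
  -- the chamber has a second vertex `Z ≠ U`, which survives the exchange
  obtain ⟨Z, hZ, hZU⟩ := exists_mem_ne (by rw [card_sdiff_of_mem_chambers hcard hC]; omega) U
  have hZ' : Z ∈ insert X (C.erase U) \ Fl := mem_sdiff.mpr
    ⟨mem_insert_of_mem (mem_erase.mpr ⟨hZU, (mem_sdiff.mp hZ).1⟩), (mem_sdiff.mp hZ).2⟩
  rw [hconst _ hC' Y hY Z hZ', hP Z hZ]

theorem exists_linearIndependent_spanning_eigenfunctions (hV : finrank K E = n + 2)
    (hF : IsFlag Fl) (hcard : Fl.card + N = n) :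
    ∃ g : Fin N → (Submodule K E → ℝ), LinearIndependent ℝ g ∧
      (∀ k, (∀ W, ¬ VertF Fl W → g k W = 0) ∧
        ∀ W, VertF Fl W → lapF K n Fl (g k) W = ((N : ℝ) + 1) * g k W) ∧
      ∀ f : Submodule K E → ℝ, (∀ W, ¬ VertF Fl W → f W = 0) →
        (∀ W, VertF Fl W → lapF K n Fl f W = ((N : ℝ) + 1) * f W) →
        f ∈ Submodule.span ℝ (Set.range g) := by
  have hT := card_linkTypes hV hF hcard
  obtain ⟨α₀, hα₀⟩ := card_pos.mp (by omega : 0 < (linkTypes n Fl).card)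
  have hT' : ((linkTypes n Fl).erase α₀).card = N := by
    rw [card_erase_of_mem hα₀, hT]
    rfl
  set e := ((linkTypes n Fl).erase α₀).orderIsoOfFin hT'
  have he : ∀ k, (e k : ℕ) ≠ α₀ ∧ (e k : ℕ) ∈ linkTypes n Fl := fun k =>
    mem_erase.mp (e k).2
  refine ⟨fun k => typeIndicator Fl (e k) - typeIndicator Fl α₀, ?_,
    fun k => ⟨?_, ?_⟩, ?_⟩
  · rw [Fintype.linearIndependent_iff]
    intro a ha j
    obtain ⟨W, hW, hWr⟩ := exists_vertF_finrank_eq hV hF (he j).2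
    simpa [typeIndicator, hW, hWr, (he j).1, e.injective.eq_iff] using congrFun ha W
  · intro W hW
    simp [typeIndicator, hW]
  · refine fun W hW => lapF_eq_of_typeConstant hV hcard (cf := fun α =>
      (if α = e k then 1 else 0) - if α = α₀ then 1 else 0) ?_
      (fun W hW => by simp [typeIndicator, hW]) hW
    simp [sum_sub_distrib, hα₀, (he k).2]
  · intro f hf0 hf
    obtain ⟨cf, hcf, hsum⟩ := exists_typeConstant_of_lapF_eq hV hF hcard hf
    have hf_eq : f = ∑ α ∈ linkTypes n Fl,
        cf α • (typeIndicator Fl α - typeIndicator Fl α₀) := by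
      funext W
      by_cases hW : VertF Fl W
      · simp [typeIndicator, hW, hcf W hW, mul_sub, sum_sub_distrib, hsum,
          hW.finrank_mem_linkTypes hV]
      · simp [typeIndicator, hW, hf0 W hW]
    rw [hf_eq]
    refine Submodule.sum_mem _ fun α hα => Submodule.smul_mem _ _ ?_
    by_cases h : α = α₀
    · simp [h]
    · exact Submodule.subset_span ⟨e.symm ⟨α, mem_erase.mpr ⟨h, hα⟩⟩, by simp⟩

end Spectrum

/-- on `C^0(X_F)` (for a flag complex of dimension `N ≥ 1`):
every type-constant function whose type values sum to zero is a `Δ`-eigenfunction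
with eigenvalue `N+1`; every eigenfunction with eigenvalue `0` is constant; every
eigenfunction with eigenvalue `N+1` is type-constant with type values summing to
zero; and the eigenvalue `N+1` has multiplicity exactly `N`. -/
theorem flag_complex_top_eigenvalue (n N : ℕ) (hN : 1 ≤ N)
    (hV : Module.finrank F V = n + 2) [Fintype (Submodule F V)]
    (Fl : Finset (Submodule F V)) (hF : IsFlag Fl) (hcard : Fl.card + N = n) :
    (∀ cf : ℕ → ℝ,
      (∑ α ∈ (Finset.Icc 1 (n + 1)).filter
          (fun α => ∀ U ∈ Fl, Module.finrank F ↥U ≠ α), cf α) = 0 →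
      ∀ f : Submodule F V → ℝ,
        (∀ W, VertF Fl W → f W = cf (Module.finrank F ↥W)) →
        ∀ W, VertF Fl W → lapF F n Fl f W = ((N : ℝ) + 1) * f W) ∧
    (∀ f : Submodule F V → ℝ, (∀ W, VertF Fl W → lapF F n Fl f W = 0) →
      ∃ c : ℝ, ∀ W, VertF Fl W → f W = c) ∧
    (∀ f : Submodule F V → ℝ,
      (∀ W, VertF Fl W → lapF F n Fl f W = ((N : ℝ) + 1) * f W) →
      ∃ cf : ℕ → ℝ,
        (∀ W, VertF Fl W → f W = cf (Module.finrank F ↥W)) ∧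
        (∑ α ∈ (Finset.Icc 1 (n + 1)).filter
            (fun α => ∀ U ∈ Fl, Module.finrank F ↥U ≠ α), cf α) = 0) ∧
    (∃ g : Fin N → (Submodule F V → ℝ),
      LinearIndependent ℝ g ∧
      (∀ k, (∀ W, ¬ VertF Fl W → g k W = 0) ∧
        ∀ W, VertF Fl W → lapF F n Fl (g k) W = ((N : ℝ) + 1) * g k W) ∧
      ∀ f : Submodule F V → ℝ, (∀ W, ¬ VertF Fl W → f W = 0) →
        (∀ W, VertF Fl W → lapF F n Fl f W = ((N : ℝ) + 1) * f W) →
        f ∈ Submodule.span ℝ (Set.range g)) := by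
  have : FiniteDimensional F V := .of_finrank_pos (by omega)
  exact ⟨fun _ hsum _ hf _ hW => lapF_eq_of_typeConstant hV hcard hsum hf hW,
    fun _ hf => exists_const_of_lapF_eq_zero hV hF hN hcard hf,
    fun _ hf => exists_typeConstant_of_lapF_eq hV hF hcard hf,
    exists_linearIndependent_spanning_eigenfunctions hV hF hcard⟩

end
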